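/- The chain-of-simplices obstruction to coloring: consider a polysimplicial complex consisting of a square Q and a chain of triangles T_1, ..., T_k with T_1 sharing one edge with Q from one 1-simplex factor, T_k sharing an edge with Q from the other 1-simplex factor, and consecutive triangles sharing edges. Since all edges of each triangle must have one color and colors propagate along shared edges, any S-coloring forces the two simplex factors of Q to have the same color, contradicting injectivity of φ_Q. Hence this complex admits no S-coloring for any S. -/
import Mathlib


/-- Abstract combinatorial data of a polysimplicial complex: a type of cells,
for each cell `σ` a type `I σ` of simplex factors, a face relation
(`Face σ τ` means `P_σ` is a face of `P_τ`), and for each face inclusion an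
induced inclusion of simplex factors. -/
structure PolysimplicialData where
  Cell : Type
  I : Cell → Type
  Face : Cell → Cell → Prop
  incl : ∀ {σ τ : Cell}, Face σ τ → I σ → I τ

/-- An `S`-coloring of a polysimplicial complex: a family of injective maps
`φ σ : I σ → S`, compatible along face inclusions. -/
def IsColoring (D : PolysimplicialData) (S : Type) (φ : ∀ σ : D.Cell, D.I σ → S) : Prop :=
  (∀ σ : D.Cell, Function.Injective (φ σ)) ∧
  ∀ (σ τ : D.Cell) (h : D.Face σ τ) (i : D.I σ), φ τ (D.incl h i) = φ σ i

/-- The chain-of-triangles obstruction to colorability: suppose a complex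
contains a square `Q` with two distinct simplex factors `i ≠ j`, and a chain
of triangles `T 0, …, T k` (each with a single chosen factor `a t`), such
that: an edge connects the factor `i` of `Q` with the factor of `T 0`, an
edge connects the factor `j` of `Q` with the factor of `T k`, and for each
`t < k` consecutive triangles `T t`, `T (t+1)` share an edge.  Since colors
propagate along shared edges, any coloring would force `φ Q i = φ Q j`,
contradicting injectivity; hence the complex admits no `S`-coloring for any
`S`. -/
theorem no_coloring_of_chain (D : PolysimplicialData)
    (Q : D.Cell) (i j : D.I Q) (hij : i ≠ j)
    (k : ℕ) (T : Fin (k + 1) → D.Cell) (a : ∀ t, D.I (T t))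
    -- edge joining factor `i` of the square to the first triangle
    (e₀ : D.Cell) (b₀ : D.I e₀)
    (f₀Q : D.Face e₀ Q) (f₀T : D.Face e₀ (T 0))
    (h₀Q : D.incl f₀Q b₀ = i) (h₀T : D.incl f₀T b₀ = a 0)
    -- edge joining the last triangle to factor `j` of the square
    (e₁ : D.Cell) (b₁ : D.I e₁)
    (f₁Q : D.Face e₁ Q) (f₁T : D.Face e₁ (T (Fin.last k)))
    (h₁Q : D.incl f₁Q b₁ = j) (h₁T : D.incl f₁T b₁ = a (Fin.last k))
    -- shared edges between consecutive triangles
    (E : ∀ t : Fin k, D.Cell) (c : ∀ t : Fin k, D.I (E t))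
    (g₁ : ∀ t : Fin k, D.Face (E t) (T t.castSucc))
    (g₂ : ∀ t : Fin k, D.Face (E t) (T t.succ))
    (hg₁ : ∀ t : Fin k, D.incl (g₁ t) (c t) = a t.castSucc)
    (hg₂ : ∀ t : Fin k, D.incl (g₂ t) (c t) = a t.succ) :
    ∀ (S : Type) (φ : ∀ σ : D.Cell, D.I σ → S), ¬ IsColoring D S φ := by
  rintro S φ ⟨hinj, hcomp⟩
  have key : ∀ t : Fin (k + 1), φ (T t) (a t) = φ Q i := by
    intro t
    induction t using Fin.induction with
    | zero =>
      rw [← h₀T, hcomp, ← h₀Q, hcomp]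
    | succ t ih =>
      rw [← hg₂ t, hcomp, ← ih, ← hg₁ t, hcomp]
  have : φ Q i = φ Q j := by
    rw [← key (Fin.last k), ← h₁T, hcomp, ← h₁Q, hcomp]
  exact hij (hinj Q this)
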